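/- For G = G(m,n,k) with trivial centre, letting R = {k^j − 1 mod m : j ∈ ℤ_n} and L = {−(k^j − 1) mod m : j ∈ ℤ_n}, the right commutation semigroup P(G) equals the subsemigroup of M(G) generated by {μ(r, z) : r ∈ R, z ∈ ℤ_m} and the left commutation semigroup Λ(G) equals the subsemigroup generated by {μ(l, z) : l ∈ L, z ∈ ℤ_m}. -/

import Mathlib

/- Each `ρ(a^r b^s)` is the mu-map `μ(k^s − 1, r·k^s)` and each `λ(a^r b^s)` is
`μ(−(k^s − 1), −r·k^s)`. Since `k^n ≡ 1 (mod m)`, `k` is a unit of `ℤ_m`, so `r ↦ r·k^s`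
is a bijection of `ℤ_m`: the generators `ρ(g)` (resp. `λ(g)`) are exactly the maps `μ(x, z)`
with `x ∈ R` (resp. `x ∈ L`), and the generated semigroups agree. -/

/-- `n = ind_m(k)`: `n` is the least positive integer with `k^n ≡ 1 (mod m)`. -/
def IsIndex (m k n : ℕ) : Prop :=
  0 < n ∧ k ^ n ≡ 1 [MOD m] ∧ ∀ d : ℕ, 0 < d → k ^ d ≡ 1 [MOD m] → n ≤ d

/-- The mu-map `μ(x,y)` of `G = G(m,n,k)`, acting on elements of `G` written in
the normal form `a^i b^j` (identified with pairs `(i,j) ∈ ℤ_m × ℤ_n`):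
`(a^i b^j) μ(x,y) = a^N` with `N ≡ x·i·k^j − y·(k^j − 1) (mod m)`. -/
def Mu (m n k : ℕ) (x y : ZMod m) : Function.End (ZMod m × ZMod n) :=
  fun p => (x * p.1 * (k : ZMod m) ^ p.2.val -
    y * ((k : ZMod m) ^ p.2.val - 1), 0)

/-- The container `C(x,y) = {μ(x, yz) : z ∈ ℤ_m}`. -/
def Container (m n k : ℕ) (x y : ZMod m) :
    Set (Function.End (ZMod m × ZMod n)) :=
  {f | ∃ z : ZMod m, f = Mu m n k x (y * z)}
/-- The multiplicative closure `S*` of `S` in `ℤ_m`. -/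
def mulClosure (m : ℕ) (S : Set (ZMod m)) : Set (ZMod m) :=
  Subsemigroup.closure S

/-- `S ⊆ ℤ_m` is a base if it contains `0` and at least one unit of `ℤ_m`. -/
def IsBase (m : ℕ) (S : Set (ZMod m)) : Prop :=
  (0 : ZMod m) ∈ S ∧ ∃ u ∈ S, IsUnit u

/-- The set `Γ_μ(S) = {μ(s,z) : s ∈ S, z ∈ ℤ_m}` of mu-generators. -/
def GammaMu (m n k : ℕ) (S : Set (ZMod m)) :
    Set (Function.End (ZMod m × ZMod n)) :=
  {f | ∃ s ∈ S, ∃ z : ZMod m, f = Mu m n k s z}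

/-- The set `Π_μ(S) = {μ(s·s*, s*·z) : s ∈ S, s* ∈ S*, z ∈ ℤ_m}` of
mu-products. -/
def PiMu (m n k : ℕ) (S : Set (ZMod m)) :
    Set (Function.End (ZMod m × ZMod n)) :=
  {f | ∃ s ∈ S, ∃ t ∈ mulClosure m S, ∃ z : ZMod m,
    f = Mu m n k (s * t) (t * z)}

/-- The `G`-semigroup `Σ_G(S)`: the subsemigroup of `M(G)` (under composition)
generated by `Γ_μ(S)`. -/
def SigmaG (m n k : ℕ) (S : Set (ZMod m)) :
    Set (Function.End (ZMod m × ZMod n)) :=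
  Subsemigroup.closure (GammaMu m n k S)
/-- The right commutation map `ρ(a^r b^s) : x ↦ [x, a^r b^s]` of `G(m,n,k)`,
acting on elements written in normal form `a^i b^j ↔ (i,j)`:
`[a^i b^j, a^r b^s] = a^N` with
`N ≡ i·k^j·(k^s−1) − r·k^s·(k^j−1) (mod m)`. -/
def Rho (m n k : ℕ) (r : ZMod m) (s : ZMod n) :
    Function.End (ZMod m × ZMod n) :=
  fun p => (p.1 * (k : ZMod m) ^ p.2.val * ((k : ZMod m) ^ s.val - 1) -
    r * (k : ZMod m) ^ s.val * ((k : ZMod m) ^ p.2.val - 1), 0)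

/-- The left commutation map `λ(a^r b^s) : x ↦ [a^r b^s, x]` of `G(m,n,k)`. -/
def Lam (m n k : ℕ) (r : ZMod m) (s : ZMod n) :
    Function.End (ZMod m × ZMod n) :=
  fun p => (r * (k : ZMod m) ^ s.val * ((k : ZMod m) ^ p.2.val - 1) -
    p.1 * (k : ZMod m) ^ p.2.val * ((k : ZMod m) ^ s.val - 1), 0)

/-- The right commutation semigroup `P(G)`: the subsemigroup of maps `G → G`
generated under composition by all `ρ(g)`, `g ∈ G`. -/
def PG (m n k : ℕ) : Set (Function.End (ZMod m × ZMod n)) :=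
  Subsemigroup.closure {f | ∃ (r : ZMod m) (s : ZMod n), f = Rho m n k r s}

/-- The left commutation semigroup `Λ(G)`. -/
def LG (m n k : ℕ) : Set (Function.End (ZMod m × ZMod n)) :=
  Subsemigroup.closure {f | ∃ (r : ZMod m) (s : ZMod n), f = Lam m n k r s}

/-- The set `R = {k^j − 1 mod m : j ∈ ℤ_n}`. -/
def Rset (m n k : ℕ) : Set (ZMod m) :=
  {x | ∃ j : ZMod n, x = (k : ZMod m) ^ j.val - 1}

/-- The set `L = {−(k^j − 1) mod m : j ∈ ℤ_n}`. -/
def Lset (m n k : ℕ) : Set (ZMod m) :=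
  {x | ∃ j : ZMod n, x = -((k : ZMod m) ^ j.val - 1)}

theorem IsIndex.isUnit_natCast {m k n : ℕ} (hind : IsIndex m k n) : IsUnit (k : ZMod m) := by
  obtain ⟨hn, hpow, -⟩ := hind
  refine IsUnit.of_pow_eq_one (n := n) ?_ hn.ne'
  exact_mod_cast (ZMod.natCast_eq_natCast_iff _ _ _).mpr hpow

section

variable {m n k : ℕ}

theorem Rho_eq_Mu (r : ZMod m) (s : ZMod n) :
    Rho m n k r s = Mu m n k ((k : ZMod m) ^ s.val - 1) (r * (k : ZMod m) ^ s.val) := by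
  funext p
  simp only [Rho, Mu, Prod.mk.injEq]
  exact ⟨by ring, trivial⟩

theorem Lam_eq_Mu (r : ZMod m) (s : ZMod n) :
    Lam m n k r s = Mu m n k (-((k : ZMod m) ^ s.val - 1)) (-(r * (k : ZMod m) ^ s.val)) := by
  funext p
  simp only [Lam, Mu, Prod.mk.injEq]
  exact ⟨by ring, trivial⟩

theorem setOf_Rho_eq_GammaMu_Rset (hk : IsUnit (k : ZMod m)) :
    {f | ∃ (r : ZMod m) (s : ZMod n), f = Rho m n k r s} = GammaMu m n k (Rset m n k) := by
  ext f
  constructor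
  · rintro ⟨r, s, rfl⟩
    exact ⟨_, ⟨s, rfl⟩, _, Rho_eq_Mu r s⟩
  · rintro ⟨x, ⟨j, rfl⟩, z, rfl⟩
    obtain ⟨c, hc⟩ := (hk.pow j.val).exists_right_inv
    have hz : z * c * (k : ZMod m) ^ j.val = z := by linear_combination z * hc
    exact ⟨z * c, j, by rw [Rho_eq_Mu, hz]⟩

theorem setOf_Lam_eq_GammaMu_Lset (hk : IsUnit (k : ZMod m)) :
    {f | ∃ (r : ZMod m) (s : ZMod n), f = Lam m n k r s} = GammaMu m n k (Lset m n k) := by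
  ext f
  constructor
  · rintro ⟨r, s, rfl⟩
    exact ⟨_, ⟨s, rfl⟩, _, Lam_eq_Mu r s⟩
  · rintro ⟨x, ⟨j, rfl⟩, z, rfl⟩
    obtain ⟨c, hc⟩ := (hk.pow j.val).exists_right_inv
    have hz : -(-(z * c) * (k : ZMod m) ^ j.val) = z := by linear_combination z * hc
    exact ⟨-(z * c), j, by rw [Lam_eq_Mu, hz]⟩

end

theorem stmt_13_general (m n k : ℕ) (hind : IsIndex m k n) :
    PG m n k = SigmaG m n k (Rset m n k) ∧
      LG m n k = SigmaG m n k (Lset m n k) := by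
  have hk := hind.isUnit_natCast
  exact ⟨by rw [PG, SigmaG, setOf_Rho_eq_GammaMu_Rset hk],
    by rw [LG, SigmaG, setOf_Lam_eq_GammaMu_Lset hk]⟩

/-- `P(G) = Σ_G(R)` and `Λ(G) = Σ_G(L)`, i.e. the right (resp.
left) commutation semigroup is the subsemigroup of `M(G)` generated by
`{μ(r,z) : r ∈ R, z ∈ ℤ_m}` (resp. `{μ(l,z) : l ∈ L, z ∈ ℤ_m}`). -/
theorem stmt_13 (m n k : ℕ) (hm : 0 < m) (hk : 0 < k)
    (hcop : Nat.gcd m (k - 1) = 1) (hind : IsIndex m k n) :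
    PG m n k = SigmaG m n k (Rset m n k) ∧
      LG m n k = SigmaG m n k (Lset m n k) :=
  stmt_13_general m n k hind
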